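/- arXiv:2102.12357 — 8 statements merged into one kernel-verified Lean document; each statement's English description precedes it below -/
import Mathlib

section
/- Let q ≥ 1 and let F : ℝ^q → ℝ be differentiable and μ-smooth for some μ > 0, and bounded below by F_*. Let (Ω, 𝔽, P) be a probability space, let η satisfy 0 < η ≤ 1/μ, let g^(0), …, g^(N−1) : Ω → ℝ^q be random vectors, let w^(0) ∈ ℝ^q be a fixed initial point, and define recursively the random iterates w^(i+1) = w^(i) − η g^(i) for i = 0, …, N−1. Assume all integrands below are integrable. Then E[(1/N) Σ_{i=0}^{N−1} ‖∇F(w^(i))‖²] ≤ 2(F(w^(0)) − F_*)/(η N) + (1/N) Σ_{i=0}^{N−1} E[‖g^(i) − ∇F(w^(i))‖²]. -/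
open MeasureTheory Finset

/-! Applying the smoothness upper bound to a step `w ↦ w - η g` and expanding `⟪∇F w, g⟫` by
polarization gives `η/2 ‖∇F w‖² ≤ F w - F (w - η g) + η/2 ‖g - ∇F w‖²` as soon as
`μ η ≤ 1`. Summing over the steps telescopes the values of `F`, which drop by at most
`F (w⁽⁰⁾) - F⋆` in total; taking expectations gives the claim. -/

section InexactGradientDescent

variable {E : Type*} [NormedAddCommGroup E] [InnerProductSpace ℝ E] [CompleteSpace E]
  {F : E → ℝ} {μ η : ℝ}

theorem half_mul_sq_norm_gradient_le_descent_add_deviation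
    (hsmooth : ∀ u v : E, F u ≤ F v + inner ℝ (gradient F v) (u - v) + μ / 2 * ‖u - v‖ ^ 2)
    (hη0 : 0 < η) (hμη : μ * η ≤ 1) (w g : E) :
    η / 2 * ‖gradient F w‖ ^ 2 ≤
      F w - F (w - η • g) + η / 2 * ‖g - gradient F w‖ ^ 2 := by
  have hstep := hsmooth (w - η • g) w
  rw [sub_sub_cancel_left, inner_neg_right, real_inner_smul_right, norm_neg, norm_smul,
    Real.norm_of_nonneg hη0.le] at hstep
  have hpolar := norm_sub_sq_real g (gradient F w)
  rw [real_inner_comm] at hpolar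
  have hslack : 0 ≤ η * (1 - μ * η) * ‖g‖ ^ 2 := by
    have : 0 ≤ 1 - μ * η := by linarith
    positivity
  nlinarith

theorem sum_sq_norm_gradient_le_of_descent
    (hsmooth : ∀ u v : E, F u ≤ F v + inner ℝ (gradient F v) (u - v) + μ / 2 * ‖u - v‖ ^ 2)
    {Fstar : ℝ} (hbdd : ∀ x, Fstar ≤ F x) (hη0 : 0 < η) (hμη : μ * η ≤ 1)
    (g w : ℕ → E) (hwrec : ∀ i, w (i + 1) = w i - η • g i) (N : ℕ) :
    ∑ i ∈ range N, ‖gradient F (w i)‖ ^ 2 ≤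
      2 * (F (w 0) - Fstar) / η + ∑ i ∈ range N, ‖g i - gradient F (w i)‖ ^ 2 := by
  have hdescent : η / 2 * ∑ i ∈ range N, ‖gradient F (w i)‖ ^ 2 ≤
      F (w 0) - Fstar + η / 2 * ∑ i ∈ range N, ‖g i - gradient F (w i)‖ ^ 2 :=
    calc η / 2 * ∑ i ∈ range N, ‖gradient F (w i)‖ ^ 2
        ≤ ∑ i ∈ range N, (F (w i) - F (w (i + 1)) + η / 2 * ‖g i - gradient F (w i)‖ ^ 2) := by
          rw [mul_sum]
          gcongr with i
          rw [hwrec]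
          exact half_mul_sq_norm_gradient_le_descent_add_deviation hsmooth hη0 hμη _ _
      _ = F (w 0) - F (w N) + η / 2 * ∑ i ∈ range N, ‖g i - gradient F (w i)‖ ^ 2 := by
          rw [sum_add_distrib, sum_range_sub' (fun i => F (w i)), mul_sum]
      _ ≤ F (w 0) - Fstar + η / 2 * ∑ i ∈ range N, ‖g i - gradient F (w i)‖ ^ 2 := by
          linarith [hbdd (w N)]
  calc ∑ i ∈ range N, ‖gradient F (w i)‖ ^ 2
      = 2 / η * (η / 2 * ∑ i ∈ range N, ‖gradient F (w i)‖ ^ 2) := by field_simp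
    _ ≤ 2 / η * (F (w 0) - Fstar + η / 2 * ∑ i ∈ range N, ‖g i - gradient F (w i)‖ ^ 2) := by
        gcongr
    _ = 2 * (F (w 0) - Fstar) / η + ∑ i ∈ range N, ‖g i - gradient F (w i)‖ ^ 2 := by
        field_simp

end InexactGradientDescent

theorem convergence_rate_bounded_by_global_gradient_deviation_general
    {q N : ℕ}
    (F : EuclideanSpace ℝ (Fin q) → ℝ) (μ : ℝ)
    (hsmooth : ∀ u v : EuclideanSpace ℝ (Fin q),
      F u ≤ F v + @inner ℝ _ _ (gradient F v) (u - v) + μ / 2 * ‖u - v‖ ^ 2)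
    (Fstar : ℝ) (hbdd : ∀ x : EuclideanSpace ℝ (Fin q), Fstar ≤ F x)
    {Ω : Type*} [MeasurableSpace Ω] (P : Measure Ω) [IsProbabilityMeasure P]
    (η : ℝ) (hη0 : 0 < η) (hη : η ≤ 1 / μ)
    (g : ℕ → Ω → EuclideanSpace ℝ (Fin q))
    (w0 : EuclideanSpace ℝ (Fin q))
    (w : ℕ → Ω → EuclideanSpace ℝ (Fin q))
    (hw0 : ∀ ω : Ω, w 0 ω = w0)
    (hwrec : ∀ i : ℕ, ∀ ω : Ω, w (i + 1) ω = w i ω - η • g i ω)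
    (hint2 : ∀ i ∈ Finset.range N,
      Integrable (fun ω : Ω => ‖g i ω - gradient F (w i ω)‖ ^ 2) P) :
    (∫ ω : Ω, (1 / (N : ℝ)) * ∑ i ∈ Finset.range N, ‖gradient F (w i ω)‖ ^ 2 ∂P) ≤
      2 * (F w0 - Fstar) / (η * N) +
        (1 / (N : ℝ)) * ∑ i ∈ Finset.range N,
          ∫ ω : Ω, ‖g i ω - gradient F (w i ω)‖ ^ 2 ∂P := by
  have hμη : μ * η ≤ 1 := by
    rcases le_or_gt μ 0 with hμ | hμ
    · nlinarith
    · rwa [le_div_iff₀ hμ, mul_comm] at hη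
  have hpath (ω : Ω) := sum_sq_norm_gradient_le_of_descent hsmooth hbdd hη0 hμη
    (fun i => g i ω) (fun i => w i ω) (fun i => hwrec i ω) N
  have hdev : Integrable (fun ω => ∑ i ∈ range N, ‖g i ω - gradient F (w i ω)‖ ^ 2) P :=
    integrable_finsetSum _ hint2
  calc (∫ ω, (1 / (N : ℝ)) * ∑ i ∈ range N, ‖gradient F (w i ω)‖ ^ 2 ∂P)
      = 1 / N * ∫ ω, ∑ i ∈ range N, ‖gradient F (w i ω)‖ ^ 2 ∂P := integral_const_mul _ _
    _ ≤ 1 / N * ∫ ω, 2 * (F w0 - Fstar) / η +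
          ∑ i ∈ range N, ‖g i ω - gradient F (w i ω)‖ ^ 2 ∂P := by
        refine mul_le_mul_of_nonneg_left (integral_mono_of_nonneg
          (.of_forall fun ω => by positivity) ((integrable_const _).add hdev)
          (.of_forall fun ω => ?_)) (by positivity)
        simpa only [hw0] using hpath ω
    _ = 1 / N * (2 * (F w0 - Fstar) / η +
          ∑ i ∈ range N, ∫ ω, ‖g i ω - gradient F (w i ω)‖ ^ 2 ∂P) := by
        rw [integral_add (integrable_const _) hdev, integral_const, integral_finsetSum _ hint2,
          probReal_univ, one_smul]
    _ = _ := by ring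

/-- **Proposition 1** (convergence rate bounded by average global gradient deviation).
Let `F : ℝ^q → ℝ` be differentiable, `μ`-smooth and bounded below by `Fstar`.  For a learning
rate `0 < η ≤ 1/μ`, random gradients `g⁽⁰⁾, …, g⁽ᴺ⁻¹⁾` and the SGD iterates
`w⁽ⁱ⁺¹⁾ = w⁽ⁱ⁾ − η g⁽ⁱ⁾` started at a fixed `w⁽⁰⁾`, the expected average squared gradient norm is
bounded by `2(F(w⁽⁰⁾) − F⋆)/(ηN)` plus the average global gradient deviation. -/
theorem convergence_rate_bounded_by_global_gradient_deviation
    {q N : ℕ} (hq : 1 ≤ q) (hN : 0 < N)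
    (F : EuclideanSpace ℝ (Fin q) → ℝ) (μ : ℝ) (hμ : 0 < μ)
    (hFdiff : Differentiable ℝ F)
    (hsmooth : ∀ u v : EuclideanSpace ℝ (Fin q),
      F u ≤ F v + @inner ℝ _ _ (gradient F v) (u - v) + μ / 2 * ‖u - v‖ ^ 2)
    (Fstar : ℝ) (hbdd : ∀ x : EuclideanSpace ℝ (Fin q), Fstar ≤ F x)
    {Ω : Type*} [MeasurableSpace Ω] (P : Measure Ω) [IsProbabilityMeasure P]
    (η : ℝ) (hη0 : 0 < η) (hη : η ≤ 1 / μ)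
    (g : ℕ → Ω → EuclideanSpace ℝ (Fin q))
    (w0 : EuclideanSpace ℝ (Fin q))
    (w : ℕ → Ω → EuclideanSpace ℝ (Fin q))
    (hw0 : ∀ ω : Ω, w 0 ω = w0)
    (hwrec : ∀ i : ℕ, ∀ ω : Ω, w (i + 1) ω = w i ω - η • g i ω)
    (hint1 : ∀ i ∈ Finset.range N,
      Integrable (fun ω : Ω => ‖gradient F (w i ω)‖ ^ 2) P)
    (hint2 : ∀ i ∈ Finset.range N,
      Integrable (fun ω : Ω => ‖g i ω - gradient F (w i ω)‖ ^ 2) P) :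
    (∫ ω : Ω, (1 / (N : ℝ)) * ∑ i ∈ Finset.range N, ‖gradient F (w i ω)‖ ^ 2 ∂P) ≤
      2 * (F w0 - Fstar) / (η * N) +
        (1 / (N : ℝ)) * ∑ i ∈ Finset.range N,
          ∫ ω : Ω, ‖g i ω - gradient F (w i ω)‖ ^ 2 ∂P :=
  convergence_rate_bounded_by_global_gradient_deviation_general F μ hsmooth Fstar hbdd P η hη0 hη g
    w0 w hw0 hwrec hint2
end

section
/- Let L > 0, α > 0, R > 0 and ξ > 0 be real numbers. Then ∫_0^R (2r/R²) · ( ∫_0^{(r/R)^α ξ} h^{L−1} e^{−h} / Γ(L) dh ) dr = (γ(L, ξ) − ξ^{−2/α} γ(L + 2/α, ξ)) / Γ(L). -/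
/-!
Substituting `u = (r/R)^α ξ` turns the distance density `2r/R² dr` into `ξ^{-2/α} d(u^{2/α})`
on `[0, ξ]`. Integrating `γ(L, u)` by parts against `d(u^{2/α})` leaves the boundary term
`ξ^{2/α} γ(L, ξ)` minus the integral of `u^{2/α}` against the Gamma density, which is
`γ(L + 2/α, ξ)`.
-/

open Real

noncomputable def lowerIncompleteGamma (s x : ℝ) : ℝ :=
  ∫ t in (0:ℝ)..x, t ^ (s - 1) * Real.exp (-t)

open MeasureTheory Set

lemma intervalIntegrable_rpow_sub_one_mul_exp_neg {s : ℝ} (hs : 0 < s) (a b : ℝ) :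
    IntervalIntegrable (fun t => t ^ (s - 1) * exp (-t)) volume a b :=
  (intervalIntegral.intervalIntegrable_rpow' (by linarith)).mul_continuousOn
    (continuous_exp.comp continuous_neg).continuousOn

lemma continuous_lowerIncompleteGamma {s : ℝ} (hs : 0 < s) :
    Continuous (lowerIncompleteGamma s) :=
  intervalIntegral.continuous_primitive (intervalIntegrable_rpow_sub_one_mul_exp_neg hs) 0

lemma hasDerivAt_lowerIncompleteGamma {s x : ℝ} (hs : 0 < s) (hx : 0 < x) :
    HasDerivAt (lowerIncompleteGamma s) (x ^ (s - 1) * exp (-x)) x := by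
  have hcont : Continuous fun t : ℝ => exp (-t) := continuous_exp.comp continuous_neg
  refine intervalIntegral.integral_hasDerivAt_right
    (intervalIntegrable_rpow_sub_one_mul_exp_neg hs 0 x) ?_ ?_
  · exact ((measurable_id.pow_const _).mul hcont.measurable).stronglyMeasurable
      |>.stronglyMeasurableAtFilter
  · exact (continuousAt_rpow_const _ _ (Or.inl hx.ne')).mul hcont.continuousAt

theorem integral_rpow_mul_lowerIncompleteGamma {s p x : ℝ} (hs : 0 < s) (hp : 0 < p)
    (hx : 0 ≤ x) :
    ∫ u in (0:ℝ)..x, p * u ^ (p - 1) * lowerIncompleteGamma s u =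
      x ^ p * lowerIncompleteGamma s x - lowerIncompleteGamma (s + p) x := by
  have hparts := intervalIntegral.integral_mul_deriv_eq_deriv_mul_of_hasDerivAt
    (u := lowerIncompleteGamma s) (v := fun u => u ^ p) (v' := fun u => p * u ^ (p - 1))
    (continuous_lowerIncompleteGamma hs).continuousOn
    (continuous_rpow_const hp.le).continuousOn
    (fun u hu => hasDerivAt_lowerIncompleteGamma hs (min_eq_left hx ▸ hu.1))
    (fun u hu => hasDerivAt_rpow_const (Or.inl (min_eq_left hx ▸ hu.1).ne'))
    (intervalIntegrable_rpow_sub_one_mul_exp_neg hs 0 x)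
    ((intervalIntegral.intervalIntegrable_rpow' (by linarith)).const_mul p)
  have hshift : (∫ u in (0:ℝ)..x, u ^ (s - 1) * exp (-u) * u ^ p) =
      lowerIncompleteGamma (s + p) x := by
    refine intervalIntegral.integral_congr_ae (Filter.Eventually.of_forall fun u hu => ?_)
    rw [uIoc_of_le hx] at hu
    rw [mul_right_comm, ← rpow_add hu.1, sub_add_eq_add_sub]
  have hγ0 : lowerIncompleteGamma s 0 = 0 := intervalIntegral.integral_same
  rw [hshift, hγ0, zero_mul, sub_zero] at hparts
  simp_rw [mul_comm _ (lowerIncompleteGamma s _), hparts]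

theorem integral_two_mul_div_sq_mul_comp_rpow {α R ξ : ℝ} (hα : 0 < α) (hR : 0 < R)
    (hξ : 0 < ξ) (g : ℝ → ℝ) :
    ∫ r in (0:ℝ)..R, 2 * r / R ^ 2 * g ((r / R) ^ α * ξ) =
      ξ ^ (-(2 / α)) * ∫ u in (0:ℝ)..ξ, 2 / α * u ^ (2 / α - 1) * g u := by
  set p := 2 / α with hp
  have hpα : α * p = 2 := by rw [hp]; field_simp
  have hderiv : ∀ r ∈ Ioo (min 0 R) (max 0 R),
      HasDerivAt (fun r => (r / R) ^ α * ξ) (α * (r / R) ^ (α - 1) * (1 / R) * ξ) r := by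
    intro r hr
    rw [min_eq_left hR.le] at hr
    have hpow := hasDerivAt_rpow_const (p := α) (Or.inl (div_pos hr.1 hR).ne')
    simpa using ((hpow.comp r ((hasDerivAt_id r).div_const R)).mul_const ξ)
  have hsub := intervalIntegral.integral_comp_mul_deriv_of_deriv_nonneg
    (f := fun r => (r / R) ^ α * ξ) (g := fun u => p * u ^ (p - 1) * g u)
    (((continuous_id.div_const R).rpow_const fun _ => Or.inr hα.le).mul continuous_const
      |>.continuousOn) hderiv
    (fun r hr => by
      rw [min_eq_left hR.le] at hr
      have := div_pos hr.1 hR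
      positivity)
  rw [div_self hR.ne', one_rpow, one_mul, zero_div, zero_rpow hα.ne', zero_mul] at hsub
  rw [← hsub, ← intervalIntegral.integral_const_mul]
  refine intervalIntegral.integral_congr_ae (Filter.Eventually.of_forall fun r hr => ?_)
  rw [uIoc_of_le hR.le] at hr
  have ht : 0 < r / R := div_pos hr.1 hR
  have hξpow : ξ ^ (-p) * ξ ^ (p - 1) * ξ = 1 := by
    rw [← rpow_add hξ, ← rpow_add_one hξ.ne']
    convert rpow_zero ξ using 2
    ring
  have htpow : (r / R) ^ (α * (p - 1)) * (r / R) ^ (α - 1) = r / R := by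
    rw [← rpow_add ht]
    convert rpow_one (r / R) using 2
    linear_combination hpα
  simp only [Function.comp_apply]
  rw [mul_rpow (rpow_nonneg ht.le _) hξ.le, ← rpow_mul ht.le]
  calc 2 * r / R ^ 2 * g ((r / R) ^ α * ξ)
      = α * p * (ξ ^ (-p) * ξ ^ (p - 1) * ξ) * ((r / R) ^ (α * (p - 1)) * (r / R) ^ (α - 1)) *
          (1 / R) * g ((r / R) ^ α * ξ) := by
        rw [hpα, hξpow, htpow]
        ring
    _ = _ := by ring

/-- **Lemma 1** (computation-outage probability).  With channel-gain density
`h^{L−1}e^{−h}/Γ(L)` on `[0,∞)` and distance density `2r/R²` on `[0,R]`, the probability that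
`R^α h ≤ r^α ξ` equals `(γ(L,ξ) − ξ^{−2/α} γ(L+2/α,ξ))/Γ(L)`. -/
theorem computation_outage_probability
    (L α R ξ : ℝ) (hL : 0 < L) (hα : 0 < α) (hR : 0 < R) (hξ : 0 < ξ) :
    (∫ r in (0:ℝ)..R, (2 * r / R ^ 2) *
        ∫ h in (0:ℝ)..((r / R) ^ α * ξ), h ^ (L - 1) * Real.exp (-h) / Real.Gamma L) =
      (lowerIncompleteGamma L ξ - ξ ^ (-(2 / α)) * lowerIncompleteGamma (L + 2 / α) ξ) /
        Real.Gamma L := by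
  have hinner : ∀ x : ℝ, (∫ h in (0:ℝ)..x, h ^ (L - 1) * exp (-h) / Gamma L) =
      lowerIncompleteGamma L x / Gamma L := fun x => intervalIntegral.integral_div _ _
  simp_rw [hinner, ← mul_div_assoc, intervalIntegral.integral_div,
    integral_two_mul_div_sq_mul_comp_rpow hα hR hξ,
    integral_rpow_mul_lowerIncompleteGamma hL (div_pos two_pos hα) hξ.le]
  have hξp : ξ ^ (-(2 / α)) * ξ ^ (2 / α) = 1 := by
    rw [← rpow_add hξ, neg_add_cancel, rpow_zero]
  linear_combination (lowerIncompleteGamma L ξ / Gamma L) * hξp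
end

section
/- Let L > 0 and α > 0 be real, and define P_out(ξ) = (γ(L, ξ) − ξ^{−2/α} γ(L + 2/α, ξ)) / Γ(L) for ξ > 0. Then P_out(ξ)/ξ^L tends to 2/((αL + 2) Γ(L + 1)) as ξ → 0⁺. -/
open Real Filter Topology

/-- The computation-outage probability of Lemma 1. -/
noncomputable def Pout (L α ξ : ℝ) : ℝ :=
  (lowerIncompleteGamma L ξ - ξ ^ (-(2 / α)) * lowerIncompleteGamma (L + 2 / α) ξ) /
    Real.Gamma L

open MeasureTheory in
lemma rpow_integral_aux (s : ℝ) (hs : 0 < s) {x : ℝ} (hx : 0 < x) :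
    ∫ t in (0:ℝ)..x, t ^ (s - 1) = x ^ s / s := by
  rw [integral_rpow (Or.inl (by linarith))]
  have h1 : s - 1 + 1 = s := by ring
  rw [h1, Real.zero_rpow hs.ne', sub_zero]

open MeasureTheory in
lemma lig_bounds (s : ℝ) (hs : 0 < s) {x : ℝ} (hx : 0 < x) :
    Real.exp (-x) * (x ^ s / s) ≤ lowerIncompleteGamma s x ∧
      lowerIncompleteGamma s x ≤ x ^ s / s := by
  have hint1 : IntervalIntegrable (fun t : ℝ => t ^ (s - 1)) volume 0 x :=
    intervalIntegral.intervalIntegrable_rpow' (by linarith)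
  have hmeas : AEStronglyMeasurable (fun t : ℝ => t ^ (s - 1) * Real.exp (-t))
      (volume.restrict (Set.uIoc (0:ℝ) x)) :=
    ((measurable_id'.pow_const _).mul measurable_neg.exp).aestronglyMeasurable
  have hint2 : IntervalIntegrable (fun t : ℝ => t ^ (s - 1) * Real.exp (-t)) volume 0 x := by
    refine hint1.mono_fun hmeas ?_
    rw [Set.uIoc_of_le hx.le]
    filter_upwards [ae_restrict_mem measurableSet_Ioc] with t ht
    have h0 : (0:ℝ) ≤ t ^ (s - 1) := Real.rpow_nonneg ht.1.le _
    have he : Real.exp (-t) ≤ 1 := Real.exp_le_one_iff.mpr (by linarith [ht.1])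
    simp only [Real.norm_eq_abs, abs_mul, abs_of_nonneg h0,
      abs_of_pos (Real.exp_pos (-t))]
    nlinarith [Real.exp_pos (-t)]
  constructor
  · have := intervalIntegral.integral_mono_on hx.le (hint1.mul_const (Real.exp (-x))) hint2
      (fun t ht => by
        have h0 : (0:ℝ) ≤ t ^ (s - 1) := Real.rpow_nonneg ht.1 _
        have he : Real.exp (-x) ≤ Real.exp (-t) := Real.exp_le_exp.mpr (by linarith [ht.2])
        exact mul_le_mul_of_nonneg_left he h0)
    rwa [intervalIntegral.integral_mul_const, rpow_integral_aux s hs hx, mul_comm] at this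
  · have := intervalIntegral.integral_mono_on hx.le hint2 hint1
      (fun t ht => by
        have h0 : (0:ℝ) ≤ t ^ (s - 1) := Real.rpow_nonneg ht.1 _
        have he : Real.exp (-t) ≤ 1 := Real.exp_le_one_iff.mpr (by linarith [ht.1])
        calc t ^ (s - 1) * Real.exp (-t) ≤ t ^ (s - 1) * 1 :=
              mul_le_mul_of_nonneg_left he h0
          _ = t ^ (s - 1) := mul_one _)
    rwa [rpow_integral_aux s hs hx] at this

lemma lig_div_tendsto (s : ℝ) (hs : 0 < s) :
    Tendsto (fun x : ℝ => lowerIncompleteGamma s x / x ^ s)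
      (nhdsWithin 0 (Set.Ioi 0)) (nhds (1 / s)) := by
  have hlow : Tendsto (fun x : ℝ => Real.exp (-x) / s)
      (nhdsWithin 0 (Set.Ioi 0)) (nhds (1 / s)) := by
    have h : Tendsto (fun x : ℝ => Real.exp (-x) / s) (nhds 0) (nhds (1 / s)) := by
      have := (Real.continuous_exp.comp continuous_neg).tendsto 0
      simpa using this.div_const s
    exact h.mono_left nhdsWithin_le_nhds
  refine tendsto_of_tendsto_of_tendsto_of_le_of_le' hlow tendsto_const_nhds ?_ ?_
  · filter_upwards [self_mem_nhdsWithin] with x hx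
    have hx : (0:ℝ) < x := hx
    have hxs : (0:ℝ) < x ^ s := Real.rpow_pos_of_pos hx _
    rw [le_div_iff₀ hxs]
    calc Real.exp (-x) / s * x ^ s = Real.exp (-x) * (x ^ s / s) := by ring
      _ ≤ lowerIncompleteGamma s x := (lig_bounds s hs hx).1
  · filter_upwards [self_mem_nhdsWithin] with x hx
    have hx : (0:ℝ) < x := hx
    have hxs : (0:ℝ) < x ^ s := Real.rpow_pos_of_pos hx _
    rw [div_le_iff₀ hxs]
    calc lowerIncompleteGamma s x ≤ x ^ s / s := (lig_bounds s hs hx).2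
      _ = 1 / s * x ^ s := by ring

/-- **Corollary 1**, small-`ξ` scaling: `P_out(ξ)/ξ^L → 2/((αL+2)Γ(L+1))` as `ξ → 0⁺`. -/
theorem outage_probability_small_xi_scaling (L α : ℝ) (hL : 0 < L) (hα : 0 < α) :
    Tendsto (fun ξ : ℝ => Pout L α ξ / ξ ^ L) (nhdsWithin 0 (Set.Ioi 0))
      (nhds (2 / ((α * L + 2) * Real.Gamma (L + 1)))) := by
  have h2α : 0 < 2 / α := by positivity
  have hL2 : 0 < L + 2 / α := by linarith
  have hΓ : 0 < Real.Gamma L := Real.Gamma_pos_of_pos hL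
  have T1 := lig_div_tendsto L hL
  have T2 := lig_div_tendsto (L + 2 / α) hL2
  have Tmain : Tendsto
      (fun ξ : ℝ => (lowerIncompleteGamma L ξ / ξ ^ L -
        lowerIncompleteGamma (L + 2 / α) ξ / ξ ^ (L + 2 / α)) / Real.Gamma L)
      (nhdsWithin 0 (Set.Ioi 0))
      (nhds ((1 / L - 1 / (L + 2 / α)) / Real.Gamma L)) := (T1.sub T2).div_const _
  have hval : (1 / L - 1 / (L + 2 / α)) / Real.Gamma L
      = 2 / ((α * L + 2) * Real.Gamma (L + 1)) := by
    rw [Real.Gamma_add_one hL.ne']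
    field_simp
    ring
  rw [← hval]
  refine Tmain.congr' ?_
  filter_upwards [self_mem_nhdsWithin] with ξ hξ
  have hξ : (0:ℝ) < ξ := hξ
  have h1 : ξ ^ (L + 2 / α) = ξ ^ L * ξ ^ (2 / α) := Real.rpow_add hξ _ _
  have h2 : ξ ^ (-(2 / α)) = (ξ ^ (2 / α))⁻¹ := Real.rpow_neg hξ.le _
  have hp1 : (0:ℝ) < ξ ^ L := Real.rpow_pos_of_pos hξ _
  have hp2 : (0:ℝ) < ξ ^ (2 / α) := Real.rpow_pos_of_pos hξ _
  rw [Pout, h1, h2]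
  field_simp
end

section
/- Let L > 0 and α > 0 be real, and define P_out(ξ) = (γ(L, ξ) − ξ^{−2/α} γ(L + 2/α, ξ)) / Γ(L) for ξ > 0. Then (1 − P_out(ξ)) · ξ^{2/α} tends to Γ(L + 2/α)/Γ(L) as ξ → ∞. -/
/-!
Writing `β = 2/α` and `Γ(s, ξ)` for the upper incomplete Gamma function,
`(1 − P_out(ξ)) ξ^β = (Γ(L, ξ) ξ^β + γ(L + β, ξ)) / Γ(L)`.
The second summand tends to `Γ(L + β)/Γ(L)`. For the first, `ξ^β ≤ t^β` on the range `t > ξ`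
of the tail integral gives `0 ≤ Γ(L, ξ) ξ^β ≤ Γ(L + β, ξ)`, and the right side tends to `0`.
-/

open Real Filter Topology

open MeasureTheory Set

noncomputable def upperIncompleteGamma (s x : ℝ) : ℝ :=
  ∫ t in Ioi x, t ^ (s - 1) * Real.exp (-t)

section IncompleteGamma

variable {s : ℝ}

lemma integrableOn_rpow_mul_exp_neg_Ioi (hs : 0 < s) :
    IntegrableOn (fun t : ℝ => t ^ (s - 1) * Real.exp (-t)) (Ioi 0) :=
  (Real.GammaIntegral_convergent hs).congr_fun (fun _ _ => mul_comm _ _) measurableSet_Ioi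

lemma Gamma_eq_integral_rpow_mul_exp_neg (hs : 0 < s) :
    Real.Gamma s = ∫ t in Ioi (0:ℝ), t ^ (s - 1) * Real.exp (-t) := by
  rw [Real.Gamma_eq_integral hs]
  exact setIntegral_congr_fun measurableSet_Ioi fun _ _ => mul_comm _ _

lemma lowerIncompleteGamma_add_upperIncompleteGamma (hs : 0 < s) {x : ℝ} (hx : 0 ≤ x) :
    lowerIncompleteGamma s x + upperIncompleteGamma s x = Real.Gamma s := by
  have hint := integrableOn_rpow_mul_exp_neg_Ioi hs
  rw [Gamma_eq_integral_rpow_mul_exp_neg hs, ← Ioc_union_Ioi_eq_Ioi hx,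
    setIntegral_union Ioc_disjoint_Ioi_same measurableSet_Ioi
      (hint.mono_set Ioc_subset_Ioi_self) (hint.mono_set (Ioi_subset_Ioi hx)),
    lowerIncompleteGamma, intervalIntegral.integral_of_le hx, upperIncompleteGamma]

lemma tendsto_lowerIncompleteGamma_atTop (hs : 0 < s) :
    Tendsto (lowerIncompleteGamma s) atTop (𝓝 (Real.Gamma s)) := by
  rw [Gamma_eq_integral_rpow_mul_exp_neg hs]
  exact intervalIntegral_tendsto_integral_Ioi 0 (integrableOn_rpow_mul_exp_neg_Ioi hs) tendsto_id

lemma tendsto_upperIncompleteGamma_atTop (hs : 0 < s) :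
    Tendsto (upperIncompleteGamma s) atTop (𝓝 0) := by
  have hdiff := (tendsto_lowerIncompleteGamma_atTop hs).const_sub (Real.Gamma s)
  rw [sub_self] at hdiff
  refine hdiff.congr' ?_
  filter_upwards [eventually_ge_atTop 0] with x hx
  rw [← lowerIncompleteGamma_add_upperIncompleteGamma hs hx, add_sub_cancel_left]

lemma upperIncompleteGamma_nonneg {x : ℝ} (hx : 0 ≤ x) : 0 ≤ upperIncompleteGamma s x :=
  setIntegral_nonneg measurableSet_Ioi fun _ ht =>
    mul_nonneg (rpow_nonneg (hx.trans (le_of_lt ht)) _) (exp_pos _).le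

lemma upperIncompleteGamma_mul_rpow_le (hs : 0 < s) {β x : ℝ} (hβ : 0 ≤ β) (hx : 0 ≤ x) :
    upperIncompleteGamma s x * x ^ β ≤ upperIncompleteGamma (s + β) x := by
  rw [upperIncompleteGamma, upperIncompleteGamma, ← integral_mul_const]
  refine setIntegral_mono_on
    (((integrableOn_rpow_mul_exp_neg_Ioi hs).mono_set (Ioi_subset_Ioi hx)).mul_const _)
    ((integrableOn_rpow_mul_exp_neg_Ioi (by linarith)).mono_set (Ioi_subset_Ioi hx))
    measurableSet_Ioi fun t ht => ?_
  have ht0 : 0 < t := hx.trans_lt ht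
  calc t ^ (s - 1) * Real.exp (-t) * x ^ β
      ≤ t ^ (s - 1) * Real.exp (-t) * t ^ β := by gcongr; exact ht.le
    _ = t ^ (s + β - 1) * Real.exp (-t) := by
      rw [mul_right_comm, ← rpow_add ht0]; ring_nf

lemma tendsto_upperIncompleteGamma_mul_rpow_atTop (hs : 0 < s) {β : ℝ} (hβ : 0 ≤ β) :
    Tendsto (fun x => upperIncompleteGamma s x * x ^ β) atTop (𝓝 0) := by
  refine tendsto_of_tendsto_of_tendsto_of_le_of_le' tendsto_const_nhds
    (tendsto_upperIncompleteGamma_atTop (s := s + β) (by linarith)) ?_ ?_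
  · filter_upwards [eventually_ge_atTop 0] with x hx
    exact mul_nonneg (upperIncompleteGamma_nonneg hx) (rpow_nonneg hx _)
  · filter_upwards [eventually_ge_atTop 0] with x hx
    exact upperIncompleteGamma_mul_rpow_le hs hβ hx

end IncompleteGamma

lemma one_sub_Pout_mul_rpow {L α ξ : ℝ} (hL : 0 < L) (hξ : 0 < ξ) :
    (1 - Pout L α ξ) * ξ ^ (2 / α) =
      upperIncompleteGamma L ξ * ξ ^ (2 / α) / Real.Gamma L
        + lowerIncompleteGamma (L + 2 / α) ξ / Real.Gamma L := by
  have hG : Real.Gamma L ≠ 0 := (Real.Gamma_pos_of_pos hL).ne'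
  have hpow : ξ ^ (-(2 / α)) * ξ ^ (2 / α) = 1 := by
    rw [← rpow_add hξ, neg_add_cancel, rpow_zero]
  have hsplit := lowerIncompleteGamma_add_upperIncompleteGamma hL hξ.le
  rw [Pout]
  field_simp
  linear_combination lowerIncompleteGamma (L + 2 / α) ξ * hpow - ξ ^ (2 / α) * hsplit

/-- **Corollary 1**, large-`ξ` scaling: `(1 − P_out(ξ))·ξ^{2/α} → Γ(L+2/α)/Γ(L)` as `ξ → ∞`. -/
theorem outage_probability_large_xi_scaling (L α : ℝ) (hL : 0 < L) (hα : 0 < α) :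
    Tendsto (fun ξ : ℝ => (1 - Pout L α ξ) * ξ ^ (2 / α)) atTop
      (nhds (Real.Gamma (L + 2 / α) / Real.Gamma L)) := by
  have hβ : 0 ≤ 2 / α := by positivity
  have hlimit := ((tendsto_upperIncompleteGamma_mul_rpow_atTop hL hβ).div_const (Real.Gamma L)).add
    ((tendsto_lowerIncompleteGamma_atTop (by linarith : 0 < L + 2 / α)).div_const (Real.Gamma L))
  rw [zero_div, zero_add] at hlimit
  refine hlimit.congr' ?_
  filter_upwards [eventually_gt_atTop 0] with ξ hξ
  rw [one_sub_Pout_mul_rpow hL hξ]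
end

section
/- Let L > 0 and α > 0 be real, and define P_out(ξ) = (γ(L, ξ) − ξ^{−2/α} γ(L + 2/α, ξ)) / Γ(L) for ξ > 0. Then P_out is strictly increasing on (0, ∞). -/
open Real

/-!
Differentiating, the two terms `ξ^{L−1} e^{−ξ}` coming from `γ(L, ξ)` and from
`ξ^{−2/α} · ∂ξ γ(L + 2/α, ξ)` cancel, because `ξ^{−2/α} ξ^{L+2/α−1} = ξ^{L−1}`. What is left is
`P_out'(ξ) = (2/α) ξ^{−2/α−1} γ(L + 2/α, ξ) / Γ(L)`, which is positive for `ξ > 0`.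
-/

open MeasureTheory Set

lemma intervalIntegrable_rpow_mul_exp_neg {s x : ℝ} (hs : 0 < s) (hx : 0 ≤ x) :
    IntervalIntegrable (fun t => t ^ (s - 1) * exp (-t)) volume 0 x := by
  rw [intervalIntegrable_iff_integrableOn_Ioc_of_le hx]
  simpa only [mul_comm] using (GammaIntegral_convergent hs).mono_set Ioc_subset_Ioi_self

lemma continuousOn_rpow_mul_exp_neg (s : ℝ) :
    ContinuousOn (fun t : ℝ => t ^ (s - 1) * exp (-t)) (Ioi 0) :=
  fun t ht => ((continuousAt_rpow_const t (s - 1) (Or.inl (ne_of_gt ht))).mul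
    (continuous_exp.comp continuous_neg).continuousAt).continuousWithinAt

lemma lowerIncompleteGamma_pos {s x : ℝ} (hs : 0 < s) (hx : 0 < x) :
    0 < lowerIncompleteGamma s x :=
  intervalIntegral.intervalIntegral_pos_of_pos_on (intervalIntegrable_rpow_mul_exp_neg hs hx.le)
    (fun _ ht => mul_pos (rpow_pos_of_pos ht.1 _) (exp_pos _)) hx

lemma hasDerivAt_Pout {L α x : ℝ} (hL : 0 < L) (hLα : 0 < L + 2 / α) (hx : 0 < x) :
    HasDerivAt (Pout L α)
      (2 / α * x ^ (-(2 / α) - 1) * lowerIncompleteGamma (L + 2 / α) x / Gamma L) x := by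
  have hpow : HasDerivAt (fun ξ : ℝ => ξ ^ (-(2 / α))) (-(2 / α) * x ^ (-(2 / α) - 1)) x :=
    hasDerivAt_rpow_const (Or.inl hx.ne')
  have hcancel : x ^ (-(2 / α)) * x ^ (L + 2 / α - 1) = x ^ (L - 1) := by
    rw [← rpow_add hx]
    ring_nf
  refine (((hasDerivAt_lowerIncompleteGamma hL hx).sub
    (hpow.mul (hasDerivAt_lowerIncompleteGamma hLα hx))).div_const (Gamma L)).congr_deriv ?_
  rw [← mul_assoc, hcancel]
  ring

/-- **Corollary 1**, monotonicity: the computation-outage probability `P_out` is a strictly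
increasing function of `ξ` on `(0, ∞)`. -/
theorem outage_probability_strictMono (L α : ℝ) (hL : 0 < L) (hα : 0 < α) :
    StrictMonoOn (Pout L α) (Set.Ioi 0) := by
  have hLα : 0 < L + 2 / α := by positivity
  apply strictMonoOn_of_deriv_pos (convex_Ioi 0)
  · exact fun x hx => (hasDerivAt_Pout hL hLα hx).continuousAt.continuousWithinAt
  · intro x hx
    rw [interior_Ioi] at hx
    rw [(hasDerivAt_Pout hL hLα hx).deriv]
    exact div_pos (mul_pos (mul_pos (by positivity) (rpow_pos_of_pos hx _))
      (lowerIncompleteGamma_pos hLα hx)) (Gamma_pos_of_pos hL)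
end

section
/- Let K ≥ 1 be a natural number and p a real number. Then Σ_{m=1}^{K} (1/m) · C(K, m) · (1 − p)^m · p^{K−m} = Σ_{m=1}^{K} (p^{m−1} − p^K)/(K − m + 1), where C(K, m) denotes the binomial coefficient. Equivalently, if M is Binomial(K, 1 − p) with 0 ≤ p < 1, then (1 − p^K) · E[1/M | M > 0] = Σ_{m=1}^{K} (p^{m−1} − p^K)/(K − m + 1). -/
open Finset

lemma binom_aux (n : ℕ) (p : ℝ) :
    ∑ i ∈ Finset.range n, ((n.choose (i+1)) : ℝ) * (1-p)^(i+1) * p^(n-(i+1)) = 1 - p^n := by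
  have h := add_pow (1-p) p n
  rw [Finset.sum_range_succ'] at h
  simp only [pow_zero, Nat.sub_zero, Nat.choose_zero_right, Nat.cast_one, one_mul, mul_one] at h
  have h1 : ((1:ℝ) - p + p) ^ n = 1 := by ring_nf
  rw [h1] at h
  have : ∑ i ∈ Finset.range n, ((n.choose (i+1)) : ℝ) * (1-p)^(i+1) * p^(n-(i+1))
      = ∑ i ∈ Finset.range n, (1-p)^(i+1) * p^(n-(i+1)) * (n.choose (i+1)) := by
    apply Finset.sum_congr rfl; intro i _; ring
  rw [this]; linarith

lemma key (K : ℕ) (hK : 1 ≤ K) (p : ℝ) :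
    ∑ i ∈ Finset.range K, (1/((i:ℝ)+1)) * (K.choose (i+1) : ℝ) * (1-p)^(i+1) * p^(K-(i+1)) =
      ∑ i ∈ Finset.range K, (p^i - p^K) / ((K:ℝ) - (i:ℝ)) := by
  induction K, hK using Nat.le_induction with
  | base => simp
  | succ K hK ih =>
    have hsplit : ∀ i ∈ Finset.range (K+1),
        (1/((i:ℝ)+1)) * ((K+1).choose (i+1) : ℝ) * (1-p)^(i+1) * p^((K+1)-(i+1))
        = (1/((i:ℝ)+1)) * (K.choose (i+1) : ℝ) * (1-p)^(i+1) * p^(K-i)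
          + (1/((K:ℝ)+1)) * ((K+1).choose (i+1) : ℝ) * (1-p)^(i+1) * p^((K+1)-(i+1)) := by
      intro i hi
      have hcc : (K+1).choose (i+1) = K.choose i + K.choose (i+1) := Nat.choose_succ_succ K i
      have hmul : ((K:ℝ)+1) * (K.choose i) = ((K+1).choose (i+1) : ℝ) * ((i:ℝ)+1) := by
        have := Nat.add_one_mul_choose_eq K i
        have := congrArg (Nat.cast (R := ℝ)) this
        push_cast at this ⊢
        linarith
      have he : (K+1)-(i+1) = K - i := by omega
      rw [he]
      have hi1 : ((i:ℝ)+1) ≠ 0 := by positivity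
      have hK1 : ((K:ℝ)+1) ≠ 0 := by positivity
      have hccR : (((K+1).choose (i+1) : ℕ) : ℝ) = (K.choose i : ℝ) + (K.choose (i+1) : ℝ) := by
        rw [hcc]; push_cast; ring
      have h2 : (1/((i:ℝ)+1)) * (K.choose i : ℝ) = (1/((K:ℝ)+1)) * ((K+1).choose (i+1) : ℝ) := by
        field_simp
        linarith [hmul]
      linear_combination ((1-p)^(i+1) * p^(K-i)) * h2
        + ((1/((i:ℝ)+1)) * (1-p)^(i+1) * p^(K-i)) * hccR
    rw [Finset.sum_congr rfl hsplit, Finset.sum_add_distrib]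
    have hA : ∑ i ∈ Finset.range (K+1),
        (1/((i:ℝ)+1)) * (K.choose (i+1) : ℝ) * (1-p)^(i+1) * p^(K-i)
        = p * ∑ i ∈ Finset.range K, (1/((i:ℝ)+1)) * (K.choose (i+1) : ℝ) * (1-p)^(i+1) * p^(K-(i+1)) := by
      rw [Finset.sum_range_succ]
      have : (K.choose (K+1) : ℝ) = 0 := by simp [Nat.choose_eq_zero_of_lt]
      rw [this, Finset.mul_sum]
      simp only [mul_zero, zero_mul, add_zero]
      apply Finset.sum_congr rfl
      intro i hi
      have hi' : i < K := Finset.mem_range.mp hi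
      have : K - i = (K - (i+1)) + 1 := by omega
      rw [this, pow_succ]
      ring
    have hB : ∑ i ∈ Finset.range (K+1),
        (1/((K:ℝ)+1)) * ((K+1).choose (i+1) : ℝ) * (1-p)^(i+1) * p^((K+1)-(i+1))
        = (1 - p^(K+1)) / ((K:ℝ)+1) := by
      have : ∑ i ∈ Finset.range (K+1),
          (1/((K:ℝ)+1)) * ((K+1).choose (i+1) : ℝ) * (1-p)^(i+1) * p^((K+1)-(i+1))
          = (1/((K:ℝ)+1)) * ∑ i ∈ Finset.range (K+1),
              ((K+1).choose (i+1) : ℝ) * (1-p)^(i+1) * p^((K+1)-(i+1)) := by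
        rw [Finset.mul_sum]; apply Finset.sum_congr rfl; intro i _; ring
      rw [this, binom_aux (K+1) p]; ring
    rw [hA, hB, ih, Finset.mul_sum]
    conv_rhs => rw [Finset.sum_range_succ']
    congr 1
    · apply Finset.sum_congr rfl
      intro i _
      push_cast
      rw [← mul_div_assoc, show ((K:ℝ)+1) - ((i:ℝ)+1) = (K:ℝ) - (i:ℝ) from by ring]
      congr 1
      ring
    · push_cast
      norm_num

/-- **Lemma 6** (expected reciprocal of the number of active devices).  For `M` binomial with
parameters `K` and `1 − p`, the identity
`Σ_{m=1}^{K} (1/m)·C(K,m)·(1−p)^m·p^{K−m} = Σ_{m=1}^{K} (p^{m−1} − p^K)/(K − m + 1)` holds;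
the left-hand side is `(1 − p^K)·E[1/M | M > 0]`. -/
theorem expected_reciprocal_of_active_devices (K : ℕ) (hK : 1 ≤ K) (p : ℝ) :
    ∑ m ∈ Finset.Icc 1 K, (1 / (m : ℝ)) * (K.choose m : ℝ) * (1 - p) ^ m * p ^ (K - m) =
      ∑ m ∈ Finset.Icc 1 K, (p ^ (m - 1) - p ^ K) / ((K : ℝ) - (m : ℝ) + 1) := by
  have h := key K hK p
  rw [← Finset.Ico_add_one_right_eq_Icc, Finset.sum_Ico_eq_sum_range, Finset.sum_Ico_eq_sum_range]
  calc ∑ i ∈ Finset.range K, (1/((1+i:ℕ):ℝ)) * (K.choose (1+i) : ℝ) * (1-p)^(1+i) * p^(K-(1+i))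
      = ∑ i ∈ Finset.range K, (1/((i:ℝ)+1)) * (K.choose (i+1) : ℝ) * (1-p)^(i+1) * p^(K-(i+1)) := by
        apply Finset.sum_congr rfl; intro i _
        rw [add_comm 1 i]; push_cast; ring_nf
    _ = ∑ i ∈ Finset.range K, (p^i - p^K) / ((K:ℝ) - (i:ℝ)) := h
    _ = ∑ i ∈ Finset.range K, (p^((1+i)-1) - p^K) / ((K:ℝ) - ((1+i:ℕ):ℝ) + 1) := by
        apply Finset.sum_congr rfl; intro i _
        have : (1+i)-1 = i := by omega
        rw [this]; push_cast; ring_nf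
end

section
/- Let I be a nonempty finite index set, and for each k ∈ I let a_k > 0, c_k > 0 and d_k ≥ 0 be reals. Let S be a real with S > Σ_{k∈I} d_k/c_k. Define μ = (S − Σ_{j∈I} d_j/c_j) / (Σ_{j∈I} a_j^{3/4} c_j^{−1/4}) and p*_k = d_k/c_k + a_k^{3/4} c_k^{−1/4} μ. Then: (i) Σ_{k∈I} p*_k = S and c_k p*_k − d_k > 0 for all k; and (ii) for every family (p_k)_{k∈I} of reals with Σ_{k∈I} p_k ≤ S and c_k p_k − d_k > 0 for all k, one has Σ_{k∈I} a_k (c_k p*_k − d_k)^{−1/3} ≤ Σ_{k∈I} a_k (c_k p_k − d_k)^{−1/3}. -/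
/-!
Since `t ↦ t ^ (-1/3)` is convex on `(0, ∞)`, each summand lies above its tangent at `p*`.
The allocation `p*` is chosen so that all marginal costs `a_k c_k (c_k p*_k - d_k) ^ (-4/3)`
equal the same `μ ^ (-4/3)`; summing the tangent inequalities, the linear terms then add up to
a nonnegative multiple of `S - Σ p_k ≥ 0`.
-/

open Finset

namespace Real

theorem one_add_mul_sub_one_le_rpow {q t : ℝ} (hq : q ≤ 0) (ht : 0 < t) :
    1 + q * (t - 1) ≤ t ^ q := by
  have h1q : 0 < 1 - q := by linarith
  -- weighted AM-GM of `t ^ q` and `t`, with weights making the geometric mean `1`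
  have amgm := geom_mean_le_arith_mean2_weighted (w₁ := 1 / (1 - q)) (w₂ := -q / (1 - q))
    (by positivity) (div_nonneg (neg_nonneg.2 hq) h1q.le) (rpow_nonneg ht.le q) ht.le
    (by field_simp; ring)
  rw [← rpow_mul ht.le, ← rpow_add ht, mul_one_div, ← add_div, add_neg_cancel, zero_div,
    rpow_zero] at amgm
  have := mul_le_mul_of_nonneg_left amgm h1q.le
  field_simp at this
  linarith

theorem rpow_add_mul_rpow_sub_one_mul_sub_le_rpow {q x y : ℝ} (hq : q ≤ 0) (hx : 0 < x)
    (hy : 0 < y) : y ^ q + q * y ^ (q - 1) * (x - y) ≤ x ^ q := by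
  have h := mul_le_mul_of_nonneg_left (one_add_mul_sub_one_le_rpow hq (div_pos hx hy))
    (rpow_nonneg hy.le q)
  rw [div_rpow hx.le hy.le, mul_div_cancel₀ _ (rpow_pos_of_pos hy q).ne'] at h
  calc y ^ q + q * y ^ (q - 1) * (x - y) = y ^ q * (1 + q * (x / y - 1)) := by
        rw [rpow_sub_one hy.ne']
        field_simp
    _ ≤ x ^ q := h

end Real

theorem sum_mul_rpow_le_of_marginal_eq {ι : Type*} {I : Finset ι} {a c d p pstar : ι → ℝ}
    {q m : ℝ} (hq : q ≤ 0) (ha : ∀ k ∈ I, 0 ≤ a k) (hm : 0 ≤ m)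
    (hmarginal : ∀ k ∈ I, a k * c k * (c k * pstar k - d k) ^ (q - 1) = m)
    (hpstar : ∀ k ∈ I, 0 < c k * pstar k - d k) (hp : ∀ k ∈ I, 0 < c k * p k - d k)
    (hsum : ∑ k ∈ I, p k ≤ ∑ k ∈ I, pstar k) :
    ∑ k ∈ I, a k * (c k * pstar k - d k) ^ q ≤ ∑ k ∈ I, a k * (c k * p k - d k) ^ q := by
  have htangent : ∀ k ∈ I,
      a k * (c k * pstar k - d k) ^ q + q * m * (p k - pstar k) ≤
        a k * (c k * p k - d k) ^ q := by
    intro k hk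
    have h := mul_le_mul_of_nonneg_left
      (Real.rpow_add_mul_rpow_sub_one_mul_sub_le_rpow hq (hp k hk) (hpstar k hk)) (ha k hk)
    rw [← hmarginal k hk]
    linear_combination h
  have hlinear : 0 ≤ q * m * (∑ k ∈ I, p k - ∑ k ∈ I, pstar k) :=
    mul_nonneg_of_nonpos_of_nonpos (mul_nonpos_of_nonpos_of_nonneg hq hm) (by linarith)
  calc ∑ k ∈ I, a k * (c k * pstar k - d k) ^ q
      ≤ ∑ k ∈ I, (a k * (c k * pstar k - d k) ^ q + q * m * (p k - pstar k)) := by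
        rw [sum_add_distrib, ← mul_sum, sum_sub_distrib]
        linarith
    _ ≤ ∑ k ∈ I, a k * (c k * p k - d k) ^ q := sum_le_sum htangent

lemma optimalPower_gap_eq {a c d μ : ℝ} (hc : 0 < c) :
    c * (d / c + a ^ ((3 : ℝ) / 4) * c ^ (-(1 : ℝ) / 4) * μ) - d =
      a ^ ((3 : ℝ) / 4) * c ^ ((3 : ℝ) / 4) * μ := by
  have hc34 : c * c ^ (-(1 : ℝ) / 4) = c ^ ((3 : ℝ) / 4) := by
    rw [← Real.rpow_one_add' hc.le (by norm_num)]
    norm_num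
  rw [mul_add, mul_div_cancel₀ _ hc.ne', ← hc34]
  ring

lemma optimalPower_marginal_eq {a c μ : ℝ} (ha : 0 < a) (hc : 0 < c) (hμ : 0 < μ) :
    a * c * (a ^ ((3 : ℝ) / 4) * c ^ ((3 : ℝ) / 4) * μ) ^ (-(1 : ℝ) / 3 - 1) =
      μ ^ (-(4 : ℝ) / 3) := by
  rw [Real.mul_rpow (by positivity) hμ.le, Real.mul_rpow (by positivity) (by positivity),
    ← Real.rpow_mul ha.le, ← Real.rpow_mul hc.le]
  norm_num
  rw [Real.rpow_neg_one, Real.rpow_neg_one]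
  field_simp

theorem optimal_power_control_general
    {ι : Type*} (I : Finset ι) (hI : I.Nonempty)
    (a c d : ι → ℝ)
    (ha : ∀ k ∈ I, 0 < a k) (hc : ∀ k ∈ I, 0 < c k)
    (S : ℝ) (hS : ∑ k ∈ I, d k / c k < S)
    (μ : ℝ) (hμ : μ = (S - ∑ j ∈ I, d j / c j) /
      (∑ j ∈ I, (a j) ^ ((3 : ℝ) / 4) * (c j) ^ (-(1 : ℝ) / 4)))
    (pstar : ι → ℝ)
    (hp : ∀ k ∈ I, pstar k = d k / c k + (a k) ^ ((3 : ℝ) / 4) * (c k) ^ (-(1 : ℝ) / 4) * μ) :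
    ((∑ k ∈ I, pstar k = S) ∧ ∀ k ∈ I, 0 < c k * pstar k - d k) ∧
      ∀ p : ι → ℝ, (∑ k ∈ I, p k ≤ S) → (∀ k ∈ I, 0 < c k * p k - d k) →
        ∑ k ∈ I, a k * (c k * pstar k - d k) ^ (-(1 : ℝ) / 3) ≤
          ∑ k ∈ I, a k * (c k * p k - d k) ^ (-(1 : ℝ) / 3) := by
  have hweights : 0 < ∑ j ∈ I, (a j) ^ ((3 : ℝ) / 4) * (c j) ^ (-(1 : ℝ) / 4) :=
    sum_pos (fun j hj => by have := ha j hj; have := hc j hj; positivity) hI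
  have hμ0 : 0 < μ := hμ ▸ div_pos (sub_pos.2 hS) hweights
  have hgap : ∀ k ∈ I, c k * pstar k - d k = a k ^ ((3 : ℝ) / 4) * c k ^ ((3 : ℝ) / 4) * μ :=
    fun k hk => hp k hk ▸ optimalPower_gap_eq (hc k hk)
  have hsum : ∑ k ∈ I, pstar k = S := by
    rw [sum_congr rfl hp, sum_add_distrib, ← sum_mul, hμ, mul_div_cancel₀ _ hweights.ne']
    ring
  have hpos : ∀ k ∈ I, 0 < c k * pstar k - d k := fun k hk => by
    have := ha k hk; have := hc k hk
    rw [hgap k hk]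
    positivity
  refine ⟨⟨hsum, hpos⟩, fun p hpS hpfeas => ?_⟩
  refine sum_mul_rpow_le_of_marginal_eq (m := μ ^ (-(4 : ℝ) / 3)) (by norm_num)
    (fun k hk => (ha k hk).le) (Real.rpow_nonneg hμ0.le _) (fun k hk => ?_) hpos hpfeas
    (hsum ▸ hpS)
  rw [hgap k hk]
  exact optimalPower_marginal_eq (ha k hk) (hc k hk) hμ0

/-- **Optimal power control for server-WPT** (problem P3 and equation (53) of the paper).
With `μ = (S − Σ_j d_j/c_j)/(Σ_j a_j^{3/4} c_j^{−1/4})` and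
`p*_k = d_k/c_k + a_k^{3/4} c_k^{−1/4} μ`: the allocation `p*` exhausts the power budget, keeps
every `c_k p*_k − d_k` positive, and minimizes `Σ_k a_k (c_k p_k − d_k)^{−1/3}` over all feasible
allocations. -/
theorem optimal_power_control
    {ι : Type*} (I : Finset ι) (hI : I.Nonempty)
    (a c d : ι → ℝ)
    (ha : ∀ k ∈ I, 0 < a k) (hc : ∀ k ∈ I, 0 < c k) (hd : ∀ k ∈ I, 0 ≤ d k)
    (S : ℝ) (hS : ∑ k ∈ I, d k / c k < S)
    (μ : ℝ) (hμ : μ = (S - ∑ j ∈ I, d j / c j) /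
      (∑ j ∈ I, (a j) ^ ((3 : ℝ) / 4) * (c j) ^ (-(1 : ℝ) / 4)))
    (pstar : ι → ℝ)
    (hp : ∀ k ∈ I, pstar k = d k / c k + (a k) ^ ((3 : ℝ) / 4) * (c k) ^ (-(1 : ℝ) / 4) * μ) :
    ((∑ k ∈ I, pstar k = S) ∧ ∀ k ∈ I, 0 < c k * pstar k - d k) ∧
      ∀ p : ι → ℝ, (∑ k ∈ I, p k ≤ S) → (∀ k ∈ I, 0 < c k * p k - d k) →
        ∑ k ∈ I, a k * (c k * pstar k - d k) ^ (-(1 : ℝ) / 3) ≤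
          ∑ k ∈ I, a k * (c k * p k - d k) ^ (-(1 : ℝ) / 3) :=
  optimal_power_control_general I hI a c d ha hc S hS μ hμ pstar hp
end

section
/- Let K ≥ 2 be a natural number. Then (1/p) · ( Σ_{m=2}^{K} (p^{m−1} − p^K)/(K − m + 1) + p² ) tends to 1/(K − 1) as p → 0⁺. -/
open Finset Filter Topology

/-! Multiplying by `1/p` turns each power `p ^ n` with `n ≥ 1` into the polynomial `p ^ (n - 1)`,
so the limit is the value at `p = 0` of a polynomial; there only the `m = 2` summand survives,
contributing `1 / (K - 1)`. -/

theorem tendsto_one_div_mul_pow_nhdsNE_zero {𝕜 : Type*} [DivisionRing 𝕜] [TopologicalSpace 𝕜]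
    [ContinuousMul 𝕜] {n : ℕ} (hn : 1 ≤ n) :
    Tendsto (fun p : 𝕜 => (1 / p) * p ^ n) (𝓝[≠] 0) (𝓝 (0 ^ (n - 1))) := by
  obtain ⟨k, rfl⟩ := Nat.exists_eq_add_of_le' hn
  refine ((continuous_pow k).tendsto' 0 _ rfl).mono_left nhdsWithin_le_nhds |>.congr' ?_
  filter_upwards [self_mem_nhdsWithin] with p hp
  rw [one_div, pow_succ', inv_mul_cancel_left₀ hp]

theorem sum_Icc_two_zero_pow_div {K : ℕ} (hK : 2 ≤ K) :
    ∑ m ∈ Icc 2 K, ((0 : ℝ) ^ (m - 2) - 0 ^ (K - 1)) / ((K : ℝ) - m + 1) = 1 / ((K : ℝ) - 1) := by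
  have hKpow : (0 : ℝ) ^ (K - 1) = 0 := zero_pow (by omega)
  rw [sum_eq_single_of_mem 2 (mem_Icc.mpr ⟨le_rfl, hK⟩)]
  · rw [hKpow]
    norm_num
    ring
  · intro m hm hm2
    rw [zero_pow (by have := (mem_Icc.mp hm).1; omega), hKpow]
    simp

/-- Small-outage scaling of the residue term in **Theorem 1**:
`(1/p)·(Σ_{m=2}^{K} (p^{m−1} − p^K)/(K − m + 1) + p²) → 1/(K − 1)` as `p → 0⁺`,
i.e. the residue `R_es` scales as `O(P_out)` for small outage probability `P_out = p`. -/
theorem residue_term_small_outage_scaling (K : ℕ) (hK : 2 ≤ K) :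
    Tendsto
      (fun p : ℝ => (1 / p) *
        ((∑ m ∈ Finset.Icc 2 K, (p ^ (m - 1) - p ^ K) / ((K : ℝ) - (m : ℝ) + 1)) + p ^ 2))
      (nhdsWithin 0 (Set.Ioi 0)) (nhds (1 / ((K : ℝ) - 1))) := by
  have hlim : Tendsto (fun p : ℝ => ∑ m ∈ Icc 2 K,
        ((1 / p) * p ^ (m - 1) - (1 / p) * p ^ K) / ((K : ℝ) - m + 1) + (1 / p) * p ^ 2)
      (𝓝[≠] 0) (𝓝 (∑ m ∈ Icc 2 K, ((0 : ℝ) ^ (m - 2) - 0 ^ (K - 1)) / ((K : ℝ) - m + 1)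
        + 0 ^ 1)) := by
    refine (tendsto_finsetSum _ fun m hm => ?_).add (tendsto_one_div_mul_pow_nhdsNE_zero one_le_two)
    have hm := (mem_Icc.mp hm).1
    exact ((tendsto_one_div_mul_pow_nhdsNE_zero (by omega)).sub
      (tendsto_one_div_mul_pow_nhdsNE_zero (by omega))).div_const _
  rw [sum_Icc_two_zero_pow_div hK, pow_one, add_zero] at hlim
  refine (hlim.mono_left (nhdsWithin_mono _ fun p hp => ne_of_gt hp)).congr fun p => ?_
  simp only [mul_add, mul_sum, mul_div_assoc', mul_sub]
end
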